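/- arXiv:1409.6427 — 2 statements merged into one kernel-verified Lean document; each statement's English description precedes it below -/
import Mathlib

section
/- Equivalence of extensions along j and along the collage inclusion: let ν : i₀ ∘ j ⟹ i₁ exhibit C(j) as the collage (lax colimit) of j : A ⟶ B in a bicategory M, and let ρ : r ∘ j ⟹ f be a triangle over X. Let ⟨r,ρ⟩ : C(j) ⟶ X be the 1-morphism induced by the universal property, with isomorphisms f ≅ ⟨r,ρ⟩ ∘ i₁ and r ≅ ⟨r,ρ⟩ ∘ i₀ conjugating ⟨r,ρ⟩ ∘ ν to ρ. Then the isomorphism f ≅ ⟨r,ρ⟩ ∘ i₁ exhibits ⟨r,ρ⟩ as a right extension of f along i₁ if and only if ρ exhibits r as a right extension of f along j. -/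
open CategoryTheory Bicategory

universe w v u

variable {M : Type u} [Bicategory.{w, v} M]

/-- The precomposition functor `M(j,X) : M(B,X) ⥤ M(A,X)`. -/
@[simps]
def precompFunctor {A B : M} (j : A ⟶ B) (X : M) : (B ⟶ X) ⥤ (A ⟶ X) where
  obj g := j ≫ g
  map θ := j ◁ θ

/-- Pasting with a triangle `ν : j ≫ i₀ ⟶ i₁` (a candidate collage cocone) gives a functor
`M(C, X) ⥤ M(j,X)/M(A,X)`, sending `h` to `(i₀ ≫ h, i₁ ≫ h, h ∘ ν)`, where the target is
the comma category of `M(j,X) : M(B,X) ⥤ M(A,X)` with the identity of `M(A,X)`. -/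
@[simps]
def pasteFunctor {A B C : M} {j : A ⟶ B} {i₁ : A ⟶ C} {i₀ : B ⟶ C}
    (ν : j ≫ i₀ ⟶ i₁) (X : M) :
    (C ⟶ X) ⥤ Comma (precompFunctor j X) (𝟭 (A ⟶ X)) where
  obj h := ⟨i₀ ≫ h, i₁ ≫ h, (α_ j i₀ h).inv ≫ ν ▷ h⟩
  map η := ⟨i₀ ◁ η, i₁ ◁ η, by
    dsimp [precompFunctor]
    rw [associator_inv_naturality_right_assoc, whisker_exchange]; simp⟩

/-- `ν : j ≫ i₀ ⟶ i₁` exhibits `C` as the collage (lax colimit) of `j : A ⟶ B`: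
for every `X`, pasting with `ν` is an equivalence `M(C, X) ≃ M(j,X)/M(A,X)`. -/
def IsCollage {A B C : M} {j : A ⟶ B} {i₁ : A ⟶ C} {i₀ : B ⟶ C}
    (ν : j ≫ i₀ ⟶ i₁) : Prop :=
  ∀ X : M, (pasteFunctor ν X).IsEquivalence


/-- `ρ : j ≫ r ⟶ f` exhibits `r` as a right extension of `f` along `j`. -/
def IsRightExt {A B X : M} (j : A ⟶ B) (f : A ⟶ X)
    (r : B ⟶ X) (ρ : j ≫ r ⟶ f) : Prop :=
  ∀ g : B ⟶ X, Function.Bijective (fun θ : g ⟶ r => j ◁ θ ≫ ρ)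

/-! Pasting with `ν` is an equivalence from `M(C, X)` to the category of triangles
`j ≫ g ⟶ k`, and `e₀, e₁, conj` make it send `h` to a triangle isomorphic to `ρ`. Both extension
properties then say that a morphism of triangles into `ρ` is the same as its component at `f`:
for `i₁` the source triangles range over the essential image of pasting, i.e. over all triangles;
for `ρ` they range over the triangles `𝟙 : j ≫ g ⟶ j ≫ g`, which suffices because a morphism from
`φ : j ≫ g ⟶ k` with component `α` at `f` is a morphism from `𝟙` with component `φ ≫ α`. -/

namespace CategoryTheory

lemma Functor.bijective_map_iff_of_iso {C D : Type*} [Category C] [Category D] (G : C ⥤ D)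
    {c c' : C} (i : c ≅ c') (T : C) :
    Function.Bijective (G.map : (c ⟶ T) → _) ↔ Function.Bijective (G.map : (c' ⟶ T) → _) := by
  have hcomm : (G.map : (c' ⟶ T) → _) ∘ i.homFromEquiv = (G.mapIso i).homFromEquiv ∘ G.map := by
    ext m; simp
  rw [← Equiv.bijective_comp i.homFromEquiv, hcomm, Equiv.comp_bijective]

lemma Functor.FullyFaithful.forall_bijective_map_iff {C D E : Type*} [Category C] [Category D]
    [Category E] {P : C ⥤ D} (hP : P.FullyFaithful) [P.EssSurj] (G : D ⥤ E) {h : C} {T : D}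
    (u : P.obj h ≅ T) :
    (∀ k, Function.Bijective fun θ : k ⟶ h => G.map (P.map θ ≫ u.hom)) ↔
      ∀ c, Function.Bijective (G.map : (c ⟶ T) → _) := by
  have hk (k : C) : Function.Bijective (fun θ : k ⟶ h => G.map (P.map θ ≫ u.hom)) ↔
      Function.Bijective (G.map : (P.obj k ⟶ T) → _) :=
    Equiv.bijective_comp (hP.homEquiv.trans u.homToEquiv) G.map
  refine ⟨fun H c => ?_, fun H k => (hk k).2 (H _)⟩
  exact (G.bijective_map_iff_of_iso (P.objObjPreimageIso c) T).1 ((hk _).1 (H _))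

end CategoryTheory

lemma isRightExt_iff_forall_bijective_snd_map {A B X : M} {j : A ⟶ B} {f : A ⟶ X}
    {r : B ⟶ X} (ρ : j ≫ r ⟶ f) :
    IsRightExt j f r ρ ↔ ∀ c : Comma (precompFunctor j X) (𝟭 (A ⟶ X)),
      Function.Bijective ((Comma.snd _ _).map : (c ⟶ ⟨r, f, ρ⟩) → _) := by
  refine ⟨fun hρ c => ⟨fun m₁ m₂ hright => ?_, fun α => ?_⟩, fun H g => ?_⟩
  · have hleft : j ◁ m₁.left ≫ ρ = j ◁ m₂.left ≫ ρ :=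
      m₁.w.trans ((congrArg (c.hom ≫ ·) hright).trans m₂.w.symm)
    exact Comma.hom_ext _ _ ((hρ c.left).1 hleft) hright
  · obtain ⟨β, hβ⟩ := (hρ c.left).2 (c.hom ≫ α)
    exact ⟨⟨β, α, hβ⟩, rfl⟩
  · let e : (g ⟶ r) ≃ ((⟨g, j ≫ g, 𝟙 _⟩ : Comma (precompFunctor j X) (𝟭 _)) ⟶ ⟨r, f, ρ⟩) :=
      { toFun θ := ⟨θ, j ◁ θ ≫ ρ, (Category.id_comp _).symm⟩
        invFun m := m.left
        left_inv _ := rfl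
        right_inv m := Comma.hom_ext _ _ rfl (m.w.trans (Category.id_comp _)) }
    exact (Equiv.bijective_comp e _).2 (H _)

theorem isRightExt_along_collage_iff_general
    {A B C X : M} {j : A ⟶ B} {i₁ : A ⟶ C} {i₀ : B ⟶ C}
    (ν : j ≫ i₀ ⟶ i₁) (hcol : IsCollage ν)
    {f : A ⟶ X} {r : B ⟶ X} (ρ : j ≫ r ⟶ f)
    (h : C ⟶ X) (e₁ : i₁ ≫ h ≅ f) (e₀ : i₀ ≫ h ≅ r)
    (conj : (α_ j i₀ h).inv ≫ ν ▷ h ≫ e₁.hom = j ◁ e₀.hom ≫ ρ) :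
    IsRightExt i₁ f h e₁.hom ↔ IsRightExt j f r ρ := by
  have := hcol X
  let u : (pasteFunctor ν X).obj h ≅ ⟨r, f, ρ⟩ :=
    Comma.isoMk e₀ e₁ ((Category.assoc _ _ _).trans conj).symm
  exact ((Functor.FullyFaithful.ofFullyFaithful _).forall_bijective_map_iff (Comma.snd _ _) u).trans
    (isRightExt_iff_forall_bijective_snd_map ρ).symm

/-- Equivalence of extensions along `j` and along the collage inclusion `i₁`: let
`ν : j ≫ i₀ ⟶ i₁` exhibit `C` as the collage of `j : A ⟶ B`, with `i₀` a left adjoint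
(`i₀ ⊣ i₀✶`) such that the isomorphism `κ : i₁ ≫ i₀✶ ≅ j` is compatible with `ν`
(its inverse is the mate of `ν`).  Let `ρ : j ≫ r ⟶ f` be a triangle over `X`, and let
`h = ⟨r,ρ⟩ : C ⟶ X` come with isomorphisms `e₁ : i₁ ≫ h ≅ f` and `e₀ : i₀ ≫ h ≅ r`
conjugating `h ∘ ν` to `ρ`.  Then `e₁` exhibits `h` as a right extension of `f` along
`i₁` if and only if `ρ` exhibits `r` as a right extension of `f` along `j`. -/
theorem isRightExt_along_collage_iff
    {A B C X : M} {j : A ⟶ B} {i₁ : A ⟶ C} {i₀ : B ⟶ C}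
    (ν : j ≫ i₀ ⟶ i₁) (hcol : IsCollage ν)
    (i₀s : C ⟶ B) (adj : Bicategory.Adjunction i₀ i₀s)
    (κ : i₁ ≫ i₀s ≅ j)
    (hκ : κ.inv = (ρ_ j).inv ≫ j ◁ adj.unit ≫ (α_ j i₀ i₀s).inv ≫ ν ▷ i₀s)
    {f : A ⟶ X} {r : B ⟶ X} (ρ : j ≫ r ⟶ f)
    (h : C ⟶ X) (e₁ : i₁ ≫ h ≅ f) (e₀ : i₀ ≫ h ≅ r)
    (conj : (α_ j i₀ h).inv ≫ ν ▷ h ≫ e₁.hom = j ◁ e₀.hom ≫ ρ) :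
    IsRightExt i₁ f h e₁.hom ↔ IsRightExt j f r ρ :=
  isRightExt_along_collage_iff_general ν hcol ρ h e₁ e₀ conj
end

section
/- Tensoring squares are BC: in a monoidal bicategory M with a sub-bicategory K of left adjoints closed under ⊗, for left adjoints u : A ⟶ B and h : H ⟶ K in K, the square with horizontal sides 1 ⊗ u and vertical sides h ⊗ 1, commuting up to the interchange isomorphism (h ⊗ 1) ∘ (1 ⊗ u) ≅ (1 ⊗ u) ∘ (h ⊗ 1), has invertible mate (1_H ⊗ u) ∘ (h ⊗ 1_A)* ⟹ (h ⊗ 1_B)* ∘ (1_K ⊗ u); i.e. it is an exact square. -/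
/-!
The mate of the interchange square at `h` is the interchange isomorphism at `h✶`, hence
invertible. To see this, transpose both along the adjunctions: the two transposes out of the unit
agree because a strong transformation is compatible with identities, composition and 2-cells,
applied to the unit `𝟙 ⟶ h ≫ h✶`.
-/

open CategoryTheory Bicategory

universe w v u

variable {M : Type u} [Bicategory.{w, v} M]

/-- The mate `q✶ ≫ p ⟶ j ≫ b✶` of a square `lam : p ≫ b ⟶ q ≫ j`, formed using the
adjunctions `q ⊣ q✶` and `b ⊣ b✶` of the vertical sides. -/
def mateOfSquare {S A B U : M}
    {q : S ⟶ A} {p : S ⟶ U} {j : A ⟶ B} {b : U ⟶ B}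
    (qs : A ⟶ S) (adjq : Bicategory.Adjunction q qs)
    (bs : B ⟶ U) (adjb : Bicategory.Adjunction b bs)
    (lam : p ≫ b ⟶ q ≫ j) : qs ≫ p ⟶ j ≫ bs :=
  qs ◁ ((ρ_ p).inv ≫ p ◁ adjb.unit ≫ (α_ p b bs).inv ≫ lam ▷ bs ≫ (α_ q j bs).hom) ≫
    (α_ qs q (j ≫ bs)).inv ≫ adjq.counit ▷ (j ≫ bs) ≫ (λ_ (j ≫ bs)).hom

theorem mateOfSquare_eq_mateEquiv {S A B U : M}
    {q : S ⟶ A} {p : S ⟶ U} {j : A ⟶ B} {b : U ⟶ B}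
    (qs : A ⟶ S) (adjq : q ⊣ qs) (bs : B ⟶ U) (adjb : b ⊣ bs) (lam : p ≫ b ⟶ q ≫ j) :
    mateOfSquare qs adjq bs adjb lam = Bicategory.mateEquiv adjq adjb lam := by
  simp only [mateOfSquare, Bicategory.mateEquiv_apply, Adjunction.homEquiv₁_apply,
    Adjunction.homEquiv₂_apply]
  bicategory

namespace CategoryTheory.Pseudofunctor.StrongTrans

variable {B C : Type*} [Bicategory B] [Bicategory C] {F G : B ⥤ᵖ C} (η : StrongTrans F G)

theorem mapUnit_whiskerRight_naturality {a b : B} {f : a ⟶ b} {g : b ⟶ a} (e : 𝟙 a ⟶ f ≫ g) :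
    (λ_ _).inv ≫ ((F.mapId a).inv ≫ F.map₂ e ≫ (F.mapComp f g).hom) ▷ η.app a ≫
        (α_ _ _ _).hom ≫ F.map f ◁ (η.naturality g).hom =
      (ρ_ _).inv ≫ η.app a ◁ ((G.mapId a).inv ≫ G.map₂ e ≫ (G.mapComp f g).hom) ≫
        (α_ _ _ _).inv ≫ (η.naturality f).inv ▷ G.map g ≫ (α_ _ _ _).hom := by
  have hcomp : F.map f ◁ (η.naturality g).hom =
      (α_ _ _ _).inv ≫ (F.mapComp f g).inv ▷ η.app a ≫ (η.naturality (f ≫ g)).hom ≫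
        η.app a ◁ (G.mapComp f g).hom ≫ (α_ _ _ _).inv ≫ (η.naturality f).inv ▷ G.map g ≫
        (α_ _ _ _).hom := by
    simp [η.naturality_comp_assoc]
  have hid : (F.mapId a).inv ▷ η.app a ≫ (η.naturality (𝟙 a)).hom =
      (λ_ _).hom ≫ (ρ_ _).inv ≫ η.app a ◁ (G.mapId a).inv := by
    rw [← cancel_mono (η.app a ◁ (G.mapId a).hom)]
    simp
  rw [hcomp]
  simp only [comp_whiskerRight, Category.assoc, hom_inv_whiskerRight_assoc, Iso.hom_inv_id_assoc,
    η.naturality_naturality_assoc, reassoc_of% hid]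
  simp

theorem mateEquiv_naturality_inv {a b : B} {f : a ⟶ b} {g : b ⟶ a} (adj : f ⊣ g)
    (adjF : F.map f ⊣ F.map g)
    (hF : adjF.unit = (F.mapId a).inv ≫ F.map₂ adj.unit ≫ (F.mapComp f g).hom)
    (adjG : G.map f ⊣ G.map g)
    (hG : adjG.unit = (G.mapId a).inv ≫ G.map₂ adj.unit ≫ (G.mapComp f g).hom) :
    Bicategory.mateEquiv adjF adjG (η.naturality f).inv = (η.naturality g).hom := by
  rw [mateEquiv_eq_iff, Adjunction.homEquiv₁_symm_apply, Adjunction.homEquiv₂_apply, hF, hG]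
  simpa only [Category.assoc] using η.mapUnit_whiskerRight_naturality adj.unit

end CategoryTheory.Pseudofunctor.StrongTrans

/-- The monoidal structure enters through the pseudofunctors `F = - ⊗ A`, `G = - ⊗ B` and the
strong transformation `η = - ⊗ u : F ⟶ G`, so that `F.map h = h ⊗ 𝟙 A`, `η.app H = 𝟙 H ⊗ u` and
`η.naturality h` is the interchange isomorphism. -/
theorem tensor_square_BC_general (F G : Pseudofunctor M M)
    (η : Oplax.StrongTrans F.toOplax G.toOplax)
    {H K : M} (h : H ⟶ K) (hs : K ⟶ H) (adj : Bicategory.Adjunction h hs)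
    (adjF : Bicategory.Adjunction (F.map h) (F.map hs))
    (hFunit : adjF.unit =
      (F.mapId H).inv ≫ F.map₂ adj.unit ≫ (F.mapComp h hs).hom)
    (adjG : Bicategory.Adjunction (G.map h) (G.map hs))
    (hGunit : adjG.unit =
      (G.mapId H).inv ≫ G.map₂ adj.unit ≫ (G.mapComp h hs).hom) :
    IsIso (mateOfSquare (q := F.map h) (p := η.app H) (j := η.app K) (b := G.map h)
      (F.map hs) adjF (G.map hs) adjG (η.naturality h).inv) := by
  -- `mkOfOplax η` has the same data as `η`, but typed through `F.map` rather than `F.toOplax.map`;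
  -- the goal mixes both, which is also why `rw [hmate]` would fail.
  have hmate : mateOfSquare (F.map hs) adjF (G.map hs) adjG (η.naturality h).inv =
      (η.naturality hs).hom :=
    (mateOfSquare_eq_mateEquiv _ _ _ _ _).trans
      ((Pseudofunctor.StrongTrans.mkOfOplax η).mateEquiv_naturality_inv adj adjF hFunit adjG hGunit)
  exact (congrArg IsIso hmate).mpr (Iso.isIso_hom _)

/-- Tensoring squares are Beck–Chevalley (exact).  We model the monoidal structure of
the monoidal bicategory `M` through the pseudofunctors `F = - ⊗ A` and `G = - ⊗ B` and
the strong (pseudo)natural transformation `η = - ⊗ u : F ⟶ G` induced by a 1-morphism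
`u : A ⟶ B`; thus `F.map h = h ⊗ 𝟙 A`, `G.map h = h ⊗ 𝟙 B`, `η.app H = 𝟙 H ⊗ u`, and
the naturality 2-isomorphism of `η` at `h` is the interchange isomorphism
`(h ⊗ 𝟙) ∘ (𝟙 ⊗ u) ≅ (𝟙 ⊗ u) ∘ (h ⊗ 𝟙)`.  If `h ⊣ h✶` and the tensored adjunctions
`h ⊗ 𝟙 ⊣ h✶ ⊗ 𝟙` are the images of `h ⊣ h✶` under `F` and `G` (their units and counits
are the canonical images of those of `h ⊣ h✶`), then the mate
`(𝟙 ⊗ u) ∘ (h ⊗ 𝟙)✶ ⟶ (h ⊗ 𝟙)✶ ∘ (𝟙 ⊗ u)` of the interchange square is invertible: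
the square is exact. -/
theorem tensor_square_BC (F G : Pseudofunctor M M)
    (η : Oplax.StrongTrans F.toOplax G.toOplax)
    {H K : M} (h : H ⟶ K) (hs : K ⟶ H) (adj : Bicategory.Adjunction h hs)
    (adjF : Bicategory.Adjunction (F.map h) (F.map hs))
    (hFunit : adjF.unit =
      (F.mapId H).inv ≫ F.map₂ adj.unit ≫ (F.mapComp h hs).hom)
    (hFcounit : adjF.counit =
      (F.mapComp hs h).inv ≫ F.map₂ adj.counit ≫ (F.mapId K).hom)
    (adjG : Bicategory.Adjunction (G.map h) (G.map hs))
    (hGunit : adjG.unit =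
      (G.mapId H).inv ≫ G.map₂ adj.unit ≫ (G.mapComp h hs).hom)
    (hGcounit : adjG.counit =
      (G.mapComp hs h).inv ≫ G.map₂ adj.counit ≫ (G.mapId K).hom) :
    IsIso (mateOfSquare (q := F.map h) (p := η.app H) (j := η.app K) (b := G.map h)
      (F.map hs) adjF (G.map hs) adjG (η.naturality h).inv) :=
  tensor_square_BC_general F G η h hs adj adjF hFunit adjG hGunit
end
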